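/- If h : ℝ × {−ω₀, ω₀} → ℝ is 2π-periodic and C² in θ for each ω and is odd in the sense h(−θ, −ω) = −h(θ, ω) for all θ, ω, then Lh(−θ, −ω) = −Lh(θ, ω) for all θ ∈ ℝ and ω ∈ {−ω₀, ω₀}; that is, the linearized operator L maps odd functions to odd functions. -/

import Mathlib

/-! The reflection `(θ, ω) ↦ (-θ, -ω)` multiplies both `S` and `Z` by `exp(-4πω)`, so the stationary
density `q` is even. Convolution against the odd kernel `sin` over a full period swaps even and odd,
hence `⟨J∗q⟩` is odd and `⟨J∗h⟩` is even for odd `h`. The flux `h (⟨J∗q⟩ + ω) + q ⟨J∗h⟩` at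
`(-θ, -ω)` is then the flux at `(θ, ω)` read at `-θ`, and differentiating once or twice in `θ`
makes both terms of `L h` odd. -/

noncomputable section

open MeasureTheory

/-- `G u ω x = x·cos u + 2ωu`. -/
def G (u ω x : ℝ) : ℝ := x * Real.cos u + 2 * ω * u

/-- The unnormalized stationary profile `S(θ, ω, x)`. -/
def S (θ ω x : ℝ) : ℝ :=
  Real.exp (G θ ω x) *
    ((1 - Real.exp (4 * Real.pi * ω)) * (∫ u in (0:ℝ)..θ, Real.exp (-(G u ω x))) +
      Real.exp (4 * Real.pi * ω) * (∫ u in (0:ℝ)..(2 * Real.pi), Real.exp (-(G u ω x))))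

/-- The normalization constant `Z(ω, x)`. -/
def Z (ω x : ℝ) : ℝ := ∫ θ in (0:ℝ)..(2 * Real.pi), S θ ω x

/-- `Ψ_μ` for the binary disorder law `μ = (1/2)(δ_{-ω₀} + δ_{ω₀})`. -/
def psiMu (ω₀ x : ℝ) : ℝ :=
  (1 / 2) * ((∫ θ in (0:ℝ)..(2 * Real.pi), Real.cos θ * S θ (-ω₀) x) / Z (-ω₀) x +
    (∫ θ in (0:ℝ)..(2 * Real.pi), Real.cos θ * S θ ω₀ x) / Z ω₀ x)

/-- The stationary density `q(θ, ω) = S(θ, ω, 2Kr)/Z(ω, 2Kr)`. -/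
def q (K r θ ω : ℝ) : ℝ := S θ ω (2 * K * r) / Z ω (2 * K * r)

/-- `κ(ω) = (1 − exp(4πω))/(2 Z(ω, 2Kr))`. -/
def kap (K r ω : ℝ) : ℝ := (1 - Real.exp (4 * Real.pi * ω)) / (2 * Z ω (2 * K * r))

/-- The averaged convolution `⟨J∗h⟩_μ(θ)` for binary disorder. -/
def Jconv (K ω₀ : ℝ) (h : ℝ → ℝ → ℝ) (θ : ℝ) : ℝ :=
  -(K / 2) * ((∫ φ in (0:ℝ)..(2 * Real.pi), Real.sin φ * h (θ - φ) (-ω₀)) +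
    (∫ φ in (0:ℝ)..(2 * Real.pi), Real.sin φ * h (θ - φ) ω₀))

/-- The linearized evolution operator `L` around the stationary density `q`. -/
def Lop (K ω₀ r : ℝ) (h : ℝ → ℝ → ℝ) (θ ω : ℝ) : ℝ :=
  (1 / 2) * deriv (deriv (fun u => h u ω)) θ -
    deriv (fun u => h u ω * (Jconv K ω₀ (q K r) u + ω) + q K r u ω * Jconv K ω₀ h u) θ

open intervalIntegral

theorem Function.Periodic.intervalIntegral_comp_neg {E : Type*} [NormedAddCommGroup E]
    [NormedSpace ℝ E] {f : ℝ → E} {T : ℝ} (hf : Function.Periodic f T) :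
    ∫ x in (0:ℝ)..T, f (-x) = ∫ x in (0:ℝ)..T, f x := by
  simpa [integral_comp_neg] using hf.intervalIntegral_add_eq (-T) 0

theorem deriv_deriv_neg_comp_neg (f : ℝ → ℝ) (x : ℝ) :
    deriv (deriv fun u => -f (-u)) x = -deriv (deriv f) (-x) := by
  have hfirst : deriv (fun u => -f (-u)) = fun s => deriv f (-s) := by
    funext s
    rw [deriv.fun_neg, deriv_comp_neg, neg_neg]
  rw [hfirst, deriv_comp_neg]

section Profile

variable (ω x : ℝ)

lemma G_neg (u : ℝ) : G (-u) ω x = G u (-ω) x := by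
  simp only [G, Real.cos_neg]; ring

lemma G_add_two_pi (u : ℝ) : G (u + 2 * Real.pi) ω x = G u ω x + 4 * Real.pi * ω := by
  simp only [G, Real.cos_add_two_pi]; ring

lemma exp_neg_G_add_two_pi (u : ℝ) :
    Real.exp (-G (u + 2 * Real.pi) ω x) = Real.exp (-(4 * Real.pi * ω)) * Real.exp (-G u ω x) := by
  rw [G_add_two_pi, ← Real.exp_add, neg_add, add_comm]

lemma exp_neg_G_sub_two_pi (u : ℝ) :
    Real.exp (-G (u - 2 * Real.pi) ω x) = Real.exp (4 * Real.pi * ω) * Real.exp (-G u ω x) := by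
  rw [← sub_add_cancel u (2 * Real.pi), exp_neg_G_add_two_pi, sub_add_cancel,
    ← mul_assoc, ← Real.exp_add, add_neg_cancel, Real.exp_zero, one_mul]

lemma continuous_exp_neg_G : Continuous fun u => Real.exp (-G u ω x) := by
  unfold G; fun_prop

lemma integral_exp_neg_G_neg_neg (θ : ℝ) :
    ∫ u in (0:ℝ)..(-θ), Real.exp (-G u (-ω) x) = -∫ u in (0:ℝ)..θ, Real.exp (-G u ω x) := by
  simpa only [G_neg, neg_neg, neg_zero, integral_symm θ 0]
    using integral_comp_neg (a := 0) (b := -θ) fun u => Real.exp (-G u ω x)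

lemma integral_exp_neg_G_neg_period :
    ∫ u in (0:ℝ)..(2 * Real.pi), Real.exp (-G u (-ω) x)
      = Real.exp (4 * Real.pi * ω) * ∫ u in (0:ℝ)..(2 * Real.pi), Real.exp (-G u ω x) := by
  have hreflect : ∫ u in (0:ℝ)..(2 * Real.pi), Real.exp (-G u (-ω) x)
      = ∫ u in (-(2 * Real.pi))..0, Real.exp (-G u ω x) := by
    simpa only [G_neg, neg_zero]
      using integral_comp_neg (a := 0) (b := 2 * Real.pi) fun u => Real.exp (-G u ω x)
  rw [hreflect, ← intervalIntegral.integral_const_mul]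
  simpa only [zero_sub, sub_self, exp_neg_G_sub_two_pi]
    using (integral_comp_sub_right (a := 0) (b := 2 * Real.pi)
      (fun u => Real.exp (-G u ω x)) (2 * Real.pi)).symm

lemma integral_exp_neg_G_add_two_pi (θ : ℝ) :
    ∫ u in (0:ℝ)..(θ + 2 * Real.pi), Real.exp (-G u ω x)
      = (∫ u in (0:ℝ)..(2 * Real.pi), Real.exp (-G u ω x))
        + Real.exp (-(4 * Real.pi * ω)) * ∫ u in (0:ℝ)..θ, Real.exp (-G u ω x) := by
  have hint (a b : ℝ) : IntervalIntegrable (fun u => Real.exp (-G u ω x)) volume a b :=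
    (continuous_exp_neg_G ω x).intervalIntegrable a b
  rw [← integral_add_adjacent_intervals (hint 0 (2 * Real.pi)) (hint _ (θ + 2 * Real.pi)),
    ← intervalIntegral.integral_const_mul]
  congr 1
  simpa only [zero_add, exp_neg_G_add_two_pi]
    using (integral_comp_add_right (a := 0) (b := θ)
      (fun u => Real.exp (-G u ω x)) (2 * Real.pi)).symm

lemma S_neg_neg (θ : ℝ) : S (-θ) (-ω) x = Real.exp (-(4 * Real.pi * ω)) * S θ ω x := by
  unfold S
  rw [integral_exp_neg_G_neg_neg, integral_exp_neg_G_neg_period, G_neg, neg_neg,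
    show 4 * Real.pi * -ω = -(4 * Real.pi * ω) by ring, Real.exp_neg]
  field_simp
  ring

lemma S_periodic : Function.Periodic (fun θ => S θ ω x) (2 * Real.pi) := by
  intro θ
  simp only [S]
  rw [integral_exp_neg_G_add_two_pi, G_add_two_pi, Real.exp_add, Real.exp_neg]
  field_simp
  ring

lemma Z_neg : Z (-ω) x = Real.exp (-(4 * Real.pi * ω)) * Z ω x := by
  unfold Z
  rw [← (S_periodic ω x).intervalIntegral_comp_neg, ← intervalIntegral.integral_const_mul]
  simp only [← S_neg_neg, neg_neg]

end Profile

lemma q_neg_neg (K r θ ω : ℝ) : q K r (-θ) (-ω) = q K r θ ω := by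
  rw [q, q, S_neg_neg, Z_neg, mul_div_mul_left _ _ (Real.exp_ne_zero _)]

lemma q_periodic (K r ω : ℝ) : Function.Periodic (fun θ => q K r θ ω) (2 * Real.pi) :=
  fun θ => by simp only [q, S_periodic ω (2 * K * r) θ]

lemma Jconv_neg_eq_neg_mul (K ω₀ ε : ℝ) (g : ℝ → ℝ → ℝ)
    (hper : ∀ ω ∈ ({-ω₀, ω₀} : Set ℝ), Function.Periodic (fun θ => g θ ω) (2 * Real.pi))
    (hsymm : ∀ θ : ℝ, ∀ ω ∈ ({-ω₀, ω₀} : Set ℝ), g (-θ) (-ω) = ε * g θ ω)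
    (θ : ℝ) : Jconv K ω₀ g (-θ) = -ε * Jconv K ω₀ g θ := by
  have hreflect : ∀ ω ∈ ({-ω₀, ω₀} : Set ℝ),
      ∫ φ in (0:ℝ)..(2 * Real.pi), Real.sin φ * g (-θ - φ) ω
        = -ε * ∫ φ in (0:ℝ)..(2 * Real.pi), Real.sin φ * g (θ - φ) (-ω) := by
    intro ω hω
    have hω' : -ω ∈ ({-ω₀, ω₀} : Set ℝ) := by
      rcases hω with rfl | rfl <;> simp
    have hkernel_per : Function.Periodic (fun φ => Real.sin φ * g (-θ - φ) ω) (2 * Real.pi) :=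
      fun φ => by
        simp only [Real.sin_add_two_pi, show -θ - (φ + 2 * Real.pi) = -θ - φ - 2 * Real.pi by ring,
          (hper ω hω).sub_eq]
    rw [← hkernel_per.intervalIntegral_comp_neg, ← intervalIntegral.integral_const_mul]
    congr 1 with φ
    rw [Real.sin_neg, show -θ - -φ = -(θ - φ) by ring, ← neg_neg ω, hsymm _ _ hω', neg_neg]
    ring
  unfold Jconv
  rw [hreflect _ (by simp), hreflect _ (by simp), neg_neg]
  ring

lemma Jconv_q_neg (K ω₀ r θ : ℝ) : Jconv K ω₀ (q K r) (-θ) = -Jconv K ω₀ (q K r) θ := by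
  simpa using Jconv_neg_eq_neg_mul K ω₀ 1 (q K r) (fun ω _ => q_periodic K r ω)
    (fun θ ω _ => by rw [one_mul, q_neg_neg]) θ

lemma Jconv_neg_of_odd (K ω₀ : ℝ) (h : ℝ → ℝ → ℝ)
    (hper : ∀ ω ∈ ({-ω₀, ω₀} : Set ℝ), Function.Periodic (fun θ => h θ ω) (2 * Real.pi))
    (hodd : ∀ θ : ℝ, ∀ ω ∈ ({-ω₀, ω₀} : Set ℝ), h (-θ) (-ω) = -h θ ω) (θ : ℝ) :
    Jconv K ω₀ h (-θ) = Jconv K ω₀ h θ := by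
  simpa using Jconv_neg_eq_neg_mul K ω₀ (-1) h hper (fun θ ω hω => by rw [hodd θ ω hω]; ring) θ

theorem stmt2_general (K ω₀ r : ℝ) (h : ℝ → ℝ → ℝ)
    (hper : ∀ ω ∈ ({-ω₀, ω₀} : Set ℝ), Function.Periodic (fun θ => h θ ω) (2 * Real.pi))
    (hodd : ∀ θ : ℝ, ∀ ω ∈ ({-ω₀, ω₀} : Set ℝ), h (-θ) (-ω) = -h θ ω) :
    ∀ θ : ℝ, ∀ ω ∈ ({-ω₀, ω₀} : Set ℝ),
      Lop K ω₀ r h (-θ) (-ω) = -Lop K ω₀ r h θ ω := by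
  intro θ ω hω
  have hh_reflect (u : ℝ) : h u (-ω) = -h (-u) ω := by
    rw [← hodd (-u) ω hω, neg_neg]
  have hflux_reflect :
      (fun u => h u (-ω) * (Jconv K ω₀ (q K r) u + -ω) + q K r u (-ω) * Jconv K ω₀ h u)
        = fun u =>
          (fun v => h v ω * (Jconv K ω₀ (q K r) v + ω) + q K r v ω * Jconv K ω₀ h v) (-u) := by
    funext u
    rw [hh_reflect, ← q_neg_neg K r u (-ω), neg_neg, ← Jconv_neg_of_odd K ω₀ h hper hodd u,
      ← neg_neg u, Jconv_q_neg, neg_neg]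
    ring
  unfold Lop
  rw [hflux_reflect, funext hh_reflect, deriv_deriv_neg_comp_neg (fun v => h v ω),
    deriv_comp_neg (fun v => h v ω * (Jconv K ω₀ (q K r) v + ω) + q K r v ω * Jconv K ω₀ h v),
    neg_neg]
  ring

/-- The linearized operator `L` maps odd functions (in the joint sense) to odd functions. -/
theorem stmt2 (K ω₀ r : ℝ) (hK : 0 < K) (hω₀ : 0 < ω₀) (hr : 0 < r)
    (hfix : r = psiMu ω₀ (2 * K * r)) (h : ℝ → ℝ → ℝ)
    (hper : ∀ ω ∈ ({-ω₀, ω₀} : Set ℝ), Function.Periodic (fun θ => h θ ω) (2 * Real.pi))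
    (hC2 : ∀ ω ∈ ({-ω₀, ω₀} : Set ℝ), ContDiff ℝ 2 (fun θ => h θ ω))
    (hodd : ∀ θ : ℝ, ∀ ω ∈ ({-ω₀, ω₀} : Set ℝ), h (-θ) (-ω) = -h θ ω) :
    ∀ θ : ℝ, ∀ ω ∈ ({-ω₀, ω₀} : Set ℝ),
      Lop K ω₀ r h (-θ) (-ω) = -Lop K ω₀ r h θ ω :=
  stmt2_general K ω₀ r h hper hodd
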